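/- Suslin Bounding for Π¹₁ sets implies Bounding: assume that for every Π¹₁ set A and every f : ω₁ → A there is a tree T on ω × ω₁ with p[T] = A such that { α : f(α) ∈ p[T ↾ (ω × α)] } contains a club. Then every function from ω₁ to ω₁ is bounded on a club by a canonical function for an ordinal less than ω₂. -/

import Mathlib

open ZFSet FirstOrder

namespace P746

/-! ## First-order language with membership and a wellordering predicate -/

/-- The language with two binary relation symbols: `∈` and a wellordering `<*`. -/
def L : FirstOrder.Language where
  Functions := fun _ => Empty
  Relations := fun n => match n with
    | 2 => Fin 2
    | _ => Empty

/-- The `L`-structure on (the members of) a ZF-set `M`, interpreting the first relation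
as membership and the second as a given relation `r`. -/
def mStruc (M : ZFSet) (r : ZFSet → ZFSet → Prop) : L.Structure M.toSet where
  funMap := fun f _ => f.elim
  RelMap := fun {n} => match n with
    | 0 => fun R _ => R.elim
    | 1 => fun R _ => R.elim
    | 2 => fun R v => @ite _ (R = (0 : Fin 2)) (instDecidableEqFin 2 R 0) ((v 0 : ZFSet) ∈ (v 1 : ZFSet)) (r (v 0) (v 1))
    | (_+3) => fun R _ => R.elim

/-- `X` is an elementary substructure of `(M, ∈, r)`: `X ⊆ M` and every first-order formula
with parameters from `X` holds in `X` iff it holds in `M`. -/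
def ElemSub (M : ZFSet) (r : ZFSet → ZFSet → Prop) (X : ZFSet) : Prop :=
  ∃ h : X ⊆ M,
    ∀ (n : ℕ) (φ : L.Formula (Fin n)) (v : Fin n → X.toSet),
      (letI := mStruc M r
       φ.Realize (fun i => (⟨(v i : ZFSet), h (v i).2⟩ : M.toSet))) ↔
      (letI := mStruc X r; φ.Realize v)

/-- `r` is a wellordering of the members of `S`. -/
def WOn (S : ZFSet) (r : ZFSet → ZFSet → Prop) : Prop :=
  IsWellOrder S.toSet (Subrel r S.toSet)

/-! ## Basic set-theoretic notions inside `ZFSet` -/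

/-- `x` is a (von Neumann) ordinal: a transitive set of transitive sets. -/
def IsOrd (x : ZFSet) : Prop :=
  x.IsTransitive ∧ ∀ y ∈ x.toSet, ZFSet.IsTransitive y

/-- `w` is the first uncountable ordinal `ω₁`. -/
def IsOmega1 (w : ZFSet) : Prop :=
  IsOrd w ∧ ¬ w.toSet.Countable ∧ ∀ y ∈ w.toSet, y.toSet.Countable

/-- The set `[x]^{<ω}` of finite subsets of `x`. -/
noncomputable def finPow (x : ZFSet) : ZFSet :=
  ZFSet.sep (fun a => a.toSet.Finite) x.powerset

/-- The set `[x]^n` of subsets of `x` of size `n`. -/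
noncomputable def finPowCard (x : ZFSet) (n : ℕ) : ZFSet :=
  ZFSet.sep (fun a => a.toSet.Finite ∧ a.toSet.ncard = n) x.powerset

/-- `D^X_η`: the set of finite `a ⊆ η` such that `f(a) ∈ X` for every
`f : [η]^{|a|} → ω₁` belonging to `X` (`w` stands for `ω₁`). -/
def Dset (w X η : ZFSet) : Set ZFSet :=
  {a | a ∈ finPow η ∧ ∀ f ∈ X.toSet, ZFSet.IsFunc (finPowCard η a.toSet.ncard) w f →
    ∀ v : ZFSet, ZFSet.pair a v ∈ f → v ∈ X}

/-- The Skolem hull of `X ∪ z` in `M` (with functions on `[η]^{<ω}`):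
`X` together with all values `f(a)` for `f : [η]^{<ω} → M` in `X` and finite `a ⊆ z`. -/
def SkHull (M η X z : ZFSet) : Set ZFSet :=
  X.toSet ∪ {y | ∃ f ∈ X.toSet, ZFSet.IsFunc (finPow η) M f ∧
    ∃ a : ZFSet, a ∈ finPow η ∧ a ⊆ z ∧ ZFSet.pair a y ∈ f}

/-- `x` is hereditarily of cardinality less than `κ`. -/
def HerLt (κ : Cardinal) (x : ZFSet) : Prop :=
  ZFSet.mem_wf.fix (C := fun _ => Prop)
    (fun y ih => Cardinal.mk y.toSet < κ ∧ ∀ z, ∀ h : z ∈ y, ih z h) x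

/-- `H` is the collection `H(κ)` of sets hereditarily of cardinality `< κ`. -/
def IsHCard (κ : Cardinal) (H : ZFSet) : Prop :=
  ∀ x : ZFSet, x ∈ H ↔ HerLt κ x

/-! ## Clubs, stationarity and canonical functions on `ω₁` -/

noncomputable def omega1 : Ordinal.{0} := (Cardinal.aleph 1).ord
noncomputable def omega2 : Ordinal.{0} := (Cardinal.aleph 2).ord

/-- `C` is a club (closed unbounded) subset of `ω₁`. -/
def IsClub (C : Set Ordinal.{0}) : Prop :=
  C ⊆ Set.Iio omega1 ∧
  (∀ o, o < omega1 → Order.IsSuccLimit o → (∀ b, b < o → ∃ c ∈ C, b ≤ c ∧ c < o) → o ∈ C) ∧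
  (∀ b, b < omega1 → ∃ c ∈ C, b < c ∧ c < omega1)

/-- `S` is a stationary subset of `ω₁`. -/
def IsStat (S : Set Ordinal.{0}) : Prop :=
  ∀ C, IsClub C → (S ∩ C).Nonempty

/-- `f ≤ g` on a club. -/
def BddOnClub (f g : Ordinal.{0} → Ordinal.{0}) : Prop :=
  ∃ C, IsClub C ∧ ∀ α ∈ C, f α ≤ g α

/-- `f < g` on a club. -/
def LtOnClub (f g : Ordinal.{0} → Ordinal.{0}) : Prop :=
  ∃ C, IsClub C ∧ ∀ α ∈ C, f α < g α

/-- `f` is a canonical function for `γ`: it is above every canonical function for every `β < γ`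
(mod clubs), and minimally so.  (This is the standard recursive characterization of the
statement that the empty condition in `P(ω₁)/NS_{ω₁}` forces `j(f)(ω₁^V) = γ`.) -/
def Canonical : Ordinal.{0} → (Ordinal.{0} → Ordinal.{0}) → Prop :=
  Ordinal.lt_wf.fix (C := fun _ => (Ordinal.{0} → Ordinal.{0}) → Prop)
    (fun γ ih f =>
      (∀ β, ∀ hβ : β < γ, ∀ g, ih β hβ g → LtOnClub g f) ∧
      ∀ h : Ordinal.{0} → Ordinal.{0},
        (∀ β, ∀ hβ : β < γ, ∀ g, ih β hβ g → LtOnClub g h) → BddOnClub f h)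

/-- Every `f : ω₁ → ω₁` is bounded on a club by a canonical function for some `γ < ω₂`. -/
def Bounding : Prop :=
  ∀ f : Ordinal.{0} → Ordinal.{0}, (∀ α, α < omega1 → f α < omega1) →
    ∃ γ, γ < omega2 ∧ ∃ g, Canonical γ g ∧ BddOnClub f g

/-- `o` is the order type of the set of ordinals `s`: there is a strictly increasing
enumeration of `s` indexed by the ordinals below `o`. -/
def IsOtypOf (o : Ordinal.{0}) (s : Set Ordinal.{0}) : Prop :=
  ∃ e : Ordinal.{0} → Ordinal.{0},
    (∀ i j, i < j → j < o → e i < e j) ∧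
    (∀ i, i < o → e i ∈ s) ∧ ∀ x ∈ s, ∃ i, i < o ∧ e i = x

/-! ## Trees on `ω × ω` and `ω × Ord` (as sets of pairs of lists) -/

def IsTreeN (S : Set (List ℕ × List ℕ)) : Prop :=
  ∀ p ∈ S, p.1.length = p.2.length ∧ ∀ n : ℕ, (p.1.take n, p.2.take n) ∈ S

def IsTreeO (T : Set (List ℕ × List Ordinal.{0})) : Prop :=
  ∀ p ∈ T, p.1.length = p.2.length ∧ ∀ n : ℕ, (p.1.take n, p.2.take n) ∈ T

/-- Projection of a tree on `ω × ω`. -/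
def projN (S : Set (List ℕ × List ℕ)) : Set (ℕ → ℕ) :=
  {x | ∃ y : ℕ → ℕ, ∀ n : ℕ,
    (List.ofFn (fun i : Fin n => x i), List.ofFn (fun i : Fin n => y i)) ∈ S}

/-- Projection of a tree on `ω × Ord`. -/
def projO (T : Set (List ℕ × List Ordinal.{0})) : Set (ℕ → ℕ) :=
  {x | ∃ y : ℕ → Ordinal.{0}, ∀ n : ℕ,
    (List.ofFn (fun i : Fin n => x i), List.ofFn (fun i : Fin n => y i)) ∈ T}

/-- Projection of the restricted tree `T ↾ (ω × α)`. -/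
def projOBelow (T : Set (List ℕ × List Ordinal.{0})) (α : Ordinal.{0}) : Set (ℕ → ℕ) :=
  {x | ∃ y : ℕ → Ordinal.{0}, (∀ i, y i < α) ∧ ∀ n : ℕ,
    (List.ofFn (fun i : Fin n => x i), List.ofFn (fun i : Fin n => y i)) ∈ T}

/-! ## Names, evaluation, and generic extensions -/

open Classical in
/-- Evaluation of a `P`-name `τ` by a filter `G`:
`val G τ = { val G σ : ∃ p ∈ G, (σ, p) ∈ τ }`, by recursion on rank. -/
noncomputable def val (G : ZFSet) : ZFSet → ZFSet :=
  WellFounded.fix (InvImage.wf ZFSet.rank Ordinal.lt_wf)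
    (fun τ ih =>
      ZFSet.sUnion <| ZFSet.sep
        (fun y => ∃ z ∈ τ.toSet,
          if h : ∃ σ, ZFSet.rank σ < ZFSet.rank τ ∧ ∃ p ∈ G.toSet, z = ZFSet.pair σ p
          then y = {ih h.choose h.choose_spec.1}
          else y = ∅)
        (ZFSet.powerset (ZFSet.sUnion (ZFSet.sUnion (ZFSet.sUnion τ)))))

/-- The universe is a generic extension `V[G]` of the transitive class `V` by the
partial order `(P, ≤)` (with `le` the set of pairs `(p,q)` with `p ≤ q`), `G ⊆ P`
a filter meeting every dense subset of `P` lying in `V`, and every set being the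
value of a `P`-name in `V`. -/
def IsGenericExt (V : Set ZFSet) (P le G : ZFSet) : Prop :=
  (∀ x ∈ V, ∀ y, y ∈ x → y ∈ V) ∧ P ∈ V ∧ le ∈ V ∧
  (∀ p, p ∈ P → ZFSet.pair p p ∈ le) ∧
  (∀ p q z, ZFSet.pair p q ∈ le → ZFSet.pair q z ∈ le → ZFSet.pair p z ∈ le) ∧
  (∀ p q, ZFSet.pair p q ∈ le → p ∈ P ∧ q ∈ P) ∧
  G ⊆ P ∧ G ≠ ∅ ∧
  (∀ p q, p ∈ G → q ∈ G → ∃ r, r ∈ G ∧ ZFSet.pair r p ∈ le ∧ ZFSet.pair r q ∈ le) ∧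
  (∀ p q, p ∈ G → q ∈ P → ZFSet.pair p q ∈ le → q ∈ G) ∧
  (∀ D, D ∈ V → D ⊆ P → (∀ p, p ∈ P → ∃ q, q ∈ D ∧ ZFSet.pair q p ∈ le) →
    ∃ q, q ∈ G ∧ q ∈ D) ∧
  (∀ x : ZFSet, ∃ τ, τ ∈ V ∧ x = val G τ)

/-- In the generic extension, the forcing added no new `ω`-sequences of ordinals;
i.e. `P` is `(ω, ∞)`-distributive. -/
def Distributive (V : Set ZFSet) : Prop :=
  ∀ f o : ZFSet, (o.IsTransitive ∧ ∀ y ∈ o.toSet, ZFSet.IsTransitive y) →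
    ZFSet.IsFunc ZFSet.omega o f → f ∈ V

/-! ## Ultrafilters and completeness -/

/-- `U` is an ultrafilter on the set `S`. -/
def IsUltraOn (S U : ZFSet) : Prop :=
  U ⊆ S.powerset ∧ S ∈ U ∧ (∅ : ZFSet) ∉ U ∧
  (∀ A B, A ∈ U → A ⊆ B → B ⊆ S → B ∈ U) ∧
  (∀ A B, A ∈ U → B ∈ U → A ∩ B ∈ U) ∧
  (∀ A, A ⊆ S → (A ∈ U ∨ ZFSet.sep (fun x => x ∉ A) S ∈ U))

/-- `U` is `γ`-complete with respect to families of members of `U` lying in `W`. -/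
def CompleteOn (W : Set ZFSet) (γ : Cardinal.{1}) (S U : ZFSet) : Prop :=
  ∀ F, F ∈ W → F ≠ ∅ → F ⊆ U → Cardinal.mk F.toSet < γ →
    ZFSet.sep (fun x => ∀ A ∈ F.toSet, x ∈ A) S ∈ U

/-! ## Internal finite sequences, trees and homogeneity -/

/-- The set `κ^{<ω}` of finite sequences from `κ` (functions `n → κ`, `n < ω`). -/
noncomputable def seqs (κ : ZFSet) : ZFSet :=
  ZFSet.sep (fun f => ∃ n, n ∈ ZFSet.omega ∧ ZFSet.IsFunc n κ f)
    (((κ ∪ ZFSet.omega).powerset.powerset).powerset)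

/-- The set of functions `a → b` as a ZF-set. -/
noncomputable def funsZ (a b : ZFSet) : ZFSet :=
  ZFSet.sep (fun f => ZFSet.IsFunc a b f) (((a ∪ b).powerset.powerset).powerset)

/-- Restriction of a (set-)function `f` to `m`. -/
noncomputable def restr (f m : ZFSet) : ZFSet :=
  ZFSet.sep (fun p => ∃ i v, i ∈ m ∧ p = ZFSet.pair i v) f

/-- `T` is a tree on `ω × κ`: a set of pairs of finite sequences of equal length,
closed under restriction. -/
def IsTreeZ (κ T : ZFSet) : Prop :=
  ∀ z, z ∈ T → ∃ n s t, n ∈ ZFSet.omega ∧ ZFSet.IsFunc n ZFSet.omega s ∧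
    ZFSet.IsFunc n κ t ∧ z = ZFSet.pair s t ∧
    ∀ m, m ∈ n → ZFSet.pair (restr s m) (restr t m) ∈ T

/-- `x ∈ p[T]`, computed in `W`: there is a branch witness `y ∈ W`. -/
def inProjZ (W : Set ZFSet) (κ T x : ZFSet) : Prop :=
  ∃ y, y ∈ W ∧ ZFSet.IsFunc ZFSet.omega κ y ∧
    ∀ n, n ∈ ZFSet.omega → ZFSet.pair (restr x n) (restr y n) ∈ T

/-- `x ∈ p[T ↾ (ω × A)]` where the branch takes values satisfying `Q`. -/
def inProjVal (κ T x : ZFSet) (Q : ZFSet → Prop) : Prop :=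
  ∃ y, ZFSet.IsFunc ZFSet.omega κ y ∧ (∀ i v, ZFSet.pair i v ∈ y → Q v) ∧
    ∀ n, n ∈ ZFSet.omega → ZFSet.pair (restr x n) (restr y n) ∈ T

/-- The tower `⟨π(x ↾ k) : k < ω⟩` is countably complete, relativized to `W`. -/
def CCTower (W : Set ZFSet) (κ π x : ZFSet) : Prop :=
  ∀ Af, Af ∈ W → ZFSet.IsFunc ZFSet.omega ((seqs κ).powerset) Af →
    (∀ n U a, n ∈ ZFSet.omega → ZFSet.pair (restr x n) U ∈ π →
      ZFSet.pair n a ∈ Af → a ∈ U) →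
    ∃ y, y ∈ W ∧ ZFSet.IsFunc ZFSet.omega κ y ∧
      ∀ n a, n ∈ ZFSet.omega → ZFSet.pair n a ∈ Af → restr y n ∈ a

/-- `(T, π)` is a `γ`-homogeneous tree system on `ω × κ`, relativized to the class `W`. -/
def HomSys (W : Set ZFSet) (γ : Cardinal.{1}) (κ T π : ZFSet) : Prop :=
  IsTreeZ κ T ∧
  (∀ z, z ∈ π → ∃ n s U, n ∈ ZFSet.omega ∧ ZFSet.IsFunc n ZFSet.omega s ∧
    z = ZFSet.pair s U ∧ IsUltraOn (funsZ n κ) U ∧ CompleteOn W γ (funsZ n κ) U ∧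
    ZFSet.sep (fun t => ZFSet.pair s t ∈ T) (funsZ n κ) ∈ U) ∧
  (∀ s U U', ZFSet.pair s U ∈ π → ZFSet.pair s U' ∈ π → U = U') ∧
  (∀ x, x ∈ W → ZFSet.IsFunc ZFSet.omega ZFSet.omega x →
    (inProjZ W κ T x ↔
      ((∀ n, n ∈ ZFSet.omega → ∃ U, ZFSet.pair (restr x n) U ∈ π) ∧ CCTower W κ π x)))

/-- `A` is a `γ`-homogeneously Suslin set of reals, in the sense of the class `W`. -/
def HomSuslinIn (W : Set ZFSet) (γ : Cardinal.{1}) (A : ZFSet) : Prop :=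
  A ⊆ funsZ ZFSet.omega ZFSet.omega ∧
  ∃ κ T π, κ ∈ W ∧ T ∈ W ∧ π ∈ W ∧
    (κ.IsTransitive ∧ ∀ y ∈ κ.toSet, ZFSet.IsTransitive y) ∧
    HomSys W γ κ T π ∧
    ∀ x, ZFSet.IsFunc ZFSet.omega ZFSet.omega x → (x ∈ A ↔ inProjZ W κ T x)


/-! ## Additional notions -/

/-- `γ` is a regular (limit) cardinal, as a ZF-set ordinal: the range of any function
from a smaller ordinal into `γ` is bounded. -/
def IsRegOrd (γ : ZFSet) : Prop :=
  IsOrd γ ∧ (∀ o ∈ γ.toSet, ∃ o' ∈ γ.toSet, o ∈ o') ∧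
  ∀ b f, b ∈ γ → ZFSet.IsFunc b γ f → ∃ o ∈ γ.toSet, ∀ x v, ZFSet.pair x v ∈ f → v ∈ o

/-- `Y` is a minimal `(η, λ)`-extension of `X` (inside the model `M` with wellordering `r`):
`Y ≺ M`, `Y ∩ η = X ∩ η`, and `Y` is the Skolem hull of `X ∪ A` for some `A ⊆ λ`. -/
def IsMinExt (M : ZFSet) (r : ZFSet → ZFSet → Prop) (η lam X Y : ZFSet) : Prop :=
  ElemSub M r Y ∧ Y ∩ η = X ∩ η ∧ ∃ A : ZFSet, A ⊆ lam ∧ Y.toSet = SkHull M lam X A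

/-- `U` is a normal measure on the (measurable) cardinal `λ`. -/
def IsNormalMeasure (lam U : ZFSet) : Prop :=
  IsOrd lam ∧ IsUltraOn lam U ∧
  CompleteOn Set.univ (Cardinal.mk lam.toSet) lam U ∧
  (∀ x, x ∈ lam → ({x} : ZFSet) ∉ U) ∧
  ∀ f A, A ∈ U → ZFSet.IsFunc lam lam f →
    (∀ x v, x ∈ A → ZFSet.pair x v ∈ f → (v ∈ x ∨ x = ∅)) →
    ∃ B c, B ∈ U ∧ ∀ x, x ∈ B → ZFSet.pair x c ∈ f

/-- `g` is the `ξ`-th ordinal of `M` (counting from `0`): the ordinals of `M` below `g`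
have order type `ξ`. -/
def NthOrdOf (M : ZFSet) (ξ : Ordinal.{0}) (g : ZFSet) : Prop :=
  IsOrd g ∧ g ∈ M ∧
  IsOtypOf ξ (ZFSet.rank '' {x : ZFSet | x ∈ M.toSet ∧ IsOrd x ∧ x ∈ g})

/-- The relation `≤_o` on a tree `T` on `ω × ω₁`: one sequence extends the other, and
the first coordinate of the last element of the longer one codes that the length of the
first is below the length of the second in the coded ordering.  (`decode k m n` means:
the value `k` codes `m` before `n`.) -/
def leO (T : Set (List ℕ × List Ordinal.{0})) (decode : ℕ → ℕ → ℕ → Prop)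
    (p q : List ℕ × List Ordinal.{0}) : Prop :=
  p ∈ T ∧ q ∈ T ∧
  ((p.1 <+: q.1 ∧ p.2 <+: q.2 ∧ p.1.length < q.1.length ∧
      decode (q.1.getD (q.1.length - 1) 0) p.1.length q.1.length) ∨
   (q.1 <+: p.1 ∧ q.2 <+: p.2 ∧ q.1.length < p.1.length ∧
      decode (p.1.getD (p.1.length - 1) 0) p.1.length q.1.length))

/-- The binary relation on `ω` coded by `x : ω → ω`:  comparisons of `n` with smaller
numbers are decided by `x (n - 1)`. -/
def codedRel (decode : ℕ → ℕ → ℕ → Prop) (x : ℕ → ℕ) (m n : ℕ) : Prop :=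
  (m < n ∧ decode (x (n - 1)) m n) ∨ (n < m ∧ decode (x (m - 1)) m n)

/-!
Code each `f α` by a real `x α` whose coded relation is wellfounded of rank at least `f α`, so that
`x α ∉ p[descTree]`, and apply Suslin bounding to `α ↦ x α`. This gives a tree `T` on `ω × ω₁`
projecting onto the wellfounded codes, and a club `C` on which `x α` has a branch in
`T ↾ (ω × α)`. The order `≤_t` on `T` (extend, and descend in the coded relation) is wellfounded,
since a descending sequence would assemble into a real of `p[T]` together with a descending
sequence in the relation it codes. With `ρ` a rank function for `≤_t` and
`X α = ρ[T ↾ (ω × α)]`, a branch through `x α` embeds the relation coded by `x α` into `X α`, so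
`f α ≤ otp (X α)` on `C`. Finally, `X` is an increasing filtration of `⋃_{α<ω₁} X α` by countable
sets, continuous at limits, and any such filtration has `α ↦ otp (X α)` canonical for the order
type of the union, which is below `ω₂`.
-/

/-! ### Clubs and stationary sets on `ω₁` -/

theorem omega1_eq : omega1 = Ordinal.omega 1 := Cardinal.ord_aleph 1

theorem omega1_pos : 0 < omega1 := omega1_eq ▸ Ordinal.omega_pos 1

theorem isSuccLimit_omega1 : Order.IsSuccLimit omega1 :=
  omega1_eq ▸ Cardinal.isSuccLimit_omega 1

theorem omega0_lt_omega1 : Ordinal.omega0 < omega1 :=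
  omega1_eq ▸ Ordinal.omega0_lt_omega_one

theorem add_one_lt_omega1 {a : Ordinal.{0}} (ha : a < omega1) : a + 1 < omega1 :=
  Order.succ_eq_add_one a ▸ isSuccLimit_omega1.succ_lt ha

theorem countable_Iio_of_lt_omega1 {a : Ordinal.{0}} (ha : a < omega1) :
    (Set.Iio a).Countable := by
  rw [omega1_eq, Cardinal.lt_omega_iff_card_lt, Cardinal.lt_aleph_one_iff] at ha
  rw [← Cardinal.le_aleph0_iff_set_countable, Cardinal.mk_Iio_ordinal, Cardinal.lift_le_aleph0]
  exact ha

theorem exists_lt_omega1_forall_le {s : Set Ordinal.{0}} (hs : s.Countable)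
    (h : ∀ x ∈ s, x < omega1) : ∃ b < omega1, ∀ x ∈ s, x ≤ b := by
  have := hs.to_subtype
  refine ⟨⨆ x : s, x.1, ?_, fun x hx => Ordinal.le_iSup (fun x : s => x.1) ⟨x, hx⟩⟩
  rw [omega1_eq] at h ⊢
  exact Ordinal.iSup_lt_omega_one fun x => h x x.2

theorem exists_closurePoint {u : Ordinal.{0} → Ordinal.{0}}
    (hu : ∀ x < omega1, u x < omega1) {b : Ordinal.{0}} (hb : b < omega1) :
    ∃ lam, b < lam ∧ lam < omega1 ∧ Order.IsSuccLimit lam ∧ ∀ x < lam, u x < lam := by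
  have hB : ∀ x < omega1, ∃ B < omega1, ∀ y < x, u y < B := by
    intro x hx
    obtain ⟨B, hB, hle⟩ := exists_lt_omega1_forall_le ((countable_Iio_of_lt_omega1 hx).image u)
      (Set.forall_mem_image.2 fun y hy => hu y (lt_trans hy hx))
    exact ⟨B + 1, add_one_lt_omega1 hB,
      fun y hy => (hle _ (Set.mem_image_of_mem u hy)).trans_lt (lt_add_one B)⟩
  choose! B hBω hBu using hB
  let a : ℕ → Ordinal.{0} := fun n => (fun x => max (x + 1) (B x))^[n] (b + 1)
  have ha_succ (n : ℕ) : a (n + 1) = max (a n + 1) (B (a n)) :=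
    Function.iterate_succ_apply' _ n _
  have ha (n : ℕ) : a n < omega1 := by
    induction n with
    | zero => exact add_one_lt_omega1 hb
    | succ n ih => rw [ha_succ]; exact max_lt (add_one_lt_omega1 ih) (hBω _ ih)
  have hle (n : ℕ) : a n ≤ ⨆ n, a n := Ordinal.le_iSup a n
  have hlt {x : Ordinal.{0}} (hx : x < ⨆ n, a n) : ∃ n, x < a n := Ordinal.lt_iSup_iff.1 hx
  refine ⟨⨆ n, a n, (lt_add_one b).trans_le (hle 0), ?_, ?_, fun x hx => ?_⟩
  · rw [omega1_eq] at ha ⊢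
    exact Ordinal.iSup_lt_omega_one ha
  · refine Ordinal.isSuccLimit_iff.2 ⟨((lt_add_one b).trans_le (hle 0)).ne_bot, ?_⟩
    refine Order.isSuccPrelimit_iff_succ_lt.2 fun x hx => ?_
    obtain ⟨n, hn⟩ := hlt hx
    calc Order.succ x ≤ a n := Order.succ_le_of_lt hn
      _ < a (n + 1) := by rw [ha_succ]; exact (lt_add_one _).trans_le (le_max_left _ _)
      _ ≤ _ := hle (n + 1)
  · obtain ⟨n, hn⟩ := hlt hx
    calc u x < B (a n) := hBu _ (ha n) x hn
      _ ≤ a (n + 1) := by rw [ha_succ]; exact le_max_right _ _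
      _ ≤ _ := hle (n + 1)

theorem isClub_diag {C : Ordinal.{0} → Set Ordinal.{0}} (hC : ∀ β < omega1, IsClub (C β)) :
    IsClub {α | α < omega1 ∧ Order.IsSuccLimit α ∧ ∀ β < α, α ∈ C β} := by
  refine ⟨fun α hα => hα.1, fun o ho hlim happ => ⟨ho, hlim, fun β hβ => ?_⟩, fun b hb => ?_⟩
  · refine (hC β (hβ.trans ho)).2.1 o ho hlim fun b hb => ?_
    obtain ⟨c, hc, hbc, hco⟩ := happ (max b (Order.succ β)) (max_lt hb (hlim.succ_lt hβ))
    exact ⟨c, hc.2.2 β ((Order.lt_succ β).trans_le ((le_max_right _ _).trans hbc)),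
      (le_max_left _ _).trans hbc, hco⟩
  · -- `U x` bounds the points of the clubs `C β`, `β < x`, picked above `x`; at a closure
    -- point of `U` these points accumulate, so it lies in every `C β` below it
    choose! pick hpickC hpick hpickω using fun β (hβ : β < omega1) => (hC β hβ).2.2
    have hU : ∀ x < omega1, ∃ U < omega1, ∀ β < x, pick β x ≤ U := fun x hx =>
      let ⟨U, hU, hle⟩ := exists_lt_omega1_forall_le ((countable_Iio_of_lt_omega1 hx).image _)
        (Set.forall_mem_image.2 fun β hβ => hpickω β (lt_trans hβ hx) x hx)
      ⟨U, hU, fun β hβ => hle _ (Set.mem_image_of_mem (pick · x) hβ)⟩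
    choose! U hUω hU using hU
    obtain ⟨lam, hblam, hlam, hlim, hclosed⟩ := exists_closurePoint hUω hb
    refine ⟨lam, ⟨hlam, hlim, fun β hβ => ?_⟩, hblam, hlam⟩
    refine (hC β (hβ.trans hlam)).2.1 lam hlam hlim fun c hc => ?_
    have hx : max c (Order.succ β) < lam := max_lt hc (hlim.succ_lt hβ)
    have hxω := hx.trans hlam
    refine ⟨pick β _, hpickC β (hβ.trans hlam) _ hxω,
      (le_max_left _ _).trans (hpick β (hβ.trans hlam) _ hxω).le, ?_⟩
    exact (hU _ hxω β ((Order.lt_succ β).trans_le (le_max_right _ _))).trans_lt (hclosed _ hx)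

theorem IsClub.inter {C D : Set Ordinal.{0}} (hC : IsClub C) (hD : IsClub D) :
    IsClub (C ∩ D) := by
  refine ⟨fun α hα => hC.1 hα.1, fun o ho hlim happ => ⟨hC.2.1 o ho hlim fun b hb => ?_,
    hD.2.1 o ho hlim fun b hb => ?_⟩, fun b hb => ?_⟩
  · obtain ⟨c, hc, h⟩ := happ b hb
    exact ⟨c, hc.1, h⟩
  · obtain ⟨c, hc, h⟩ := happ b hb
    exact ⟨c, hc.2, h⟩
  · -- the diagonal intersection of `C, D, D, …` lies inside `C ∩ D`
    obtain ⟨c, ⟨-, hlim, hc⟩, hbc, hcω⟩ :=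
      (isClub_diag (C := fun β => if β = 0 then C else D) fun β _ => by
        split_ifs <;> assumption).2.2 b hb
    have hC' := hc 0 hlim.pos
    have hD' := hc 1 (by simpa using hlim.succ_lt hlim.pos)
    simp only [if_pos, one_ne_zero, if_false] at hC' hD'
    exact ⟨c, ⟨hC', hD'⟩, hbc, hcω⟩

theorem isClub_Ioo {b : Ordinal.{0}} (hb : b < omega1) : IsClub (Set.Ioo b omega1) := by
  refine ⟨fun x hx => hx.2, fun o ho hlim happ => ?_, fun c hc => ?_⟩
  · obtain ⟨c, hc, -, hco⟩ := happ 0 hlim.pos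
    exact ⟨hc.1.trans hco, ho⟩
  · have hmax := add_one_lt_omega1 (max_lt hb hc)
    exact ⟨_, ⟨(le_max_left b c).trans_lt (lt_add_one _), hmax⟩,
      (le_max_right b c).trans_lt (lt_add_one _), hmax⟩

theorem isClub_setOf_isSuccLimit : IsClub {α | α < omega1 ∧ Order.IsSuccLimit α} := by
  refine ⟨fun α hα => hα.1, fun o ho hlim _ => ⟨ho, hlim⟩, fun b hb => ?_⟩
  obtain ⟨lam, hblam, hlam, hlim, -⟩ := exists_closurePoint (u := id) (fun x hx => hx) hb
  exact ⟨lam, ⟨hlam, hlim⟩, hblam, hlam⟩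

theorem IsStat.nonempty {S : Set Ordinal.{0}} (hS : IsStat S) : S.Nonempty :=
  (hS _ (isClub_Ioo omega1_pos)).mono Set.inter_subset_left

theorem IsStat.mono {S S' : Set Ordinal.{0}} (hS : IsStat S) (h : S ⊆ S') : IsStat S' :=
  fun C hC => (hS C hC).mono (Set.inter_subset_inter_left C h)

theorem IsStat.inter_isClub {S C : Set Ordinal.{0}} (hS : IsStat S) (hC : IsClub C) :
    IsStat (S ∩ C) := fun _ hD =>
  let ⟨x, hxS, hxC, hxD⟩ := hS _ (hC.inter hD)
  ⟨x, ⟨hxS, hxC⟩, hxD⟩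

theorem isStat_of_not_bddOnClub {f g : Ordinal.{0} → Ordinal.{0}} (h : ¬ BddOnClub f g) :
    IsStat {α | α < omega1 ∧ g α < f α} := by
  intro C hC
  by_contra hempty
  refine h ⟨C, hC, fun α hα => not_lt.1 fun hlt => hempty ⟨α, ⟨hC.1 hα, hlt⟩, hα⟩⟩

theorem IsStat.fodor {S : Set Ordinal.{0}} (hS : IsStat S) {F : Ordinal.{0} → Ordinal.{0}}
    (hF : ∀ α ∈ S, F α < α) : ∃ β < omega1, IsStat {α ∈ S | F α = β} := by
  by_contra! h
  choose! D hD hDS using fun β (hβ : β < omega1) => by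
    simpa [IsStat, Set.not_nonempty_iff_eq_empty] using h β hβ
  obtain ⟨α, hαS, hαω, -, hαD⟩ := hS _ (isClub_diag hD)
  exact (hDS _ ((hF α hαS).trans hαω)).subset ⟨⟨hαS, rfl⟩, hαD _ (hF α hαS)⟩

theorem IsStat.exists_isStat_fiber_of_countable {S A : Set Ordinal.{0}} (hS : IsStat S)
    (hA : A.Countable) {u : Ordinal.{0} → Ordinal.{0}} (hu : ∀ α ∈ S, u α ∈ A) :
    ∃ a, IsStat {α ∈ S | u α = a} := by
  obtain ⟨α₀, hα₀⟩ := hS.nonempty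
  obtain ⟨e, he⟩ := hA.exists_surjective ⟨_, hu α₀ hα₀⟩
  choose! n hn using fun α (hα : α ∈ S) => he ⟨u α, hu α hα⟩
  -- `n α < ω ≤ α` on a club, so Fodor's lemma applies to `n`
  obtain ⟨β, -, hβ⟩ := (hS.inter_isClub (isClub_Ioo omega0_lt_omega1)).fodor
    (F := fun α => n α) fun α hα => (Ordinal.natCast_lt_omega0 _).trans hα.2.1
  obtain ⟨α₁, hα₁, hα₁β⟩ := hβ.nonempty
  refine ⟨u α₁, hβ.mono fun α ⟨hα, hαβ⟩ => ⟨hα.1, ?_⟩⟩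
  have hnn : n α = n α₁ := Nat.cast_injective (hαβ.trans hα₁β.symm)
  simpa [hnn, hn α₁ hα₁.1] using (congrArg Subtype.val (hn α hα.1)).symm

/-! ### Order types of sets of ordinals -/

noncomputable def typeLift (s : Set Ordinal.{0}) : Ordinal.{1} :=
  Ordinal.type ((· < ·) : s → s → Prop)

open Classical in
/-- Junk value `0` when `s` is unbounded. -/
noncomputable def otp (s : Set Ordinal.{0}) : Ordinal.{0} :=
  if h : ∃ a : Ordinal.{0}, Ordinal.lift.{1} a = typeLift s then h.choose else 0

theorem lift_otp {s : Set Ordinal.{0}} {δ : Ordinal.{0}} (h : s ⊆ Set.Iio δ) :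
    Ordinal.lift.{1} (otp s) = typeLift s := by
  have hle : typeLift s ≤ Ordinal.lift.{1} δ := by
    rw [← Ordinal.type_lt_Iio]
    exact RelEmbedding.ordinal_type_le (r := ((· < ·) : s → s → Prop))
      ⟨⟨Set.inclusion h, Set.inclusion_injective h⟩, Iff.rfl⟩
  have hex : ∃ a, Ordinal.lift.{1} a = typeLift s := Ordinal.mem_range_lift_of_le hle
  rw [otp, dif_pos hex]
  exact hex.choose_spec

theorem typeLift_inter_Iio {s : Set Ordinal.{0}} {u v : Ordinal.{0}} (hu : u ∈ s) (huv : u < v) :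
    typeLift (s ∩ Set.Iio u) =
      Ordinal.typein ((· < ·) : ↥(s ∩ Set.Iio v) → _ → Prop) ⟨u, hu, huv⟩ := by
  rw [← Ordinal.type_subrel]
  exact Ordinal.type_eq.2 ⟨{
    toFun := fun x => ⟨⟨x.1, x.2.1, x.2.2.trans huv⟩, x.2.2⟩
    invFun := fun y => ⟨y.1.1, y.1.2.1, y.2⟩
    map_rel_iff' := Iff.rfl }⟩

theorem otp_inter_Iio_lt_of_mem {s : Set Ordinal.{0}} {u v : Ordinal.{0}} (hu : u ∈ s)
    (huv : u < v) : otp (s ∩ Set.Iio u) < otp (s ∩ Set.Iio v) := by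
  rw [← Ordinal.lift_lt.{1}, lift_otp Set.inter_subset_right, lift_otp Set.inter_subset_right,
    typeLift_inter_Iio hu huv]
  exact Ordinal.typein_lt_type _ _

theorem exists_otp_inter_Iio_eq {s : Set Ordinal.{0}} {v ι : Ordinal.{0}}
    (h : ι < otp (s ∩ Set.Iio v)) : ∃ u ∈ s, u < v ∧ otp (s ∩ Set.Iio u) = ι := by
  rw [← Ordinal.lift_lt.{1}, lift_otp Set.inter_subset_right] at h
  obtain ⟨⟨u, hus, huv⟩, hu⟩ := Ordinal.typein_surj _ h
  refine ⟨u, hus, huv, Ordinal.lift_inj.{1}.1 ?_⟩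
  rw [lift_otp Set.inter_subset_right, typeLift_inter_Iio hus huv]
  exact hu

theorem otp_inter_Iio_lt_omega2 {s : Set Ordinal.{0}} (hs : Cardinal.mk s ≤ Cardinal.aleph 1)
    (v : Ordinal.{0}) : otp (s ∩ Set.Iio v) < omega2 := by
  rw [← Ordinal.lift_lt.{1}, lift_otp Set.inter_subset_right, omega2, Cardinal.lift_ord,
    Cardinal.lift_aleph, Ordinal.lift_ofNat, Cardinal.lt_ord, typeLift, Ordinal.card_type]
  calc Cardinal.mk (s ∩ Set.Iio v : Set _) ≤ Cardinal.mk s :=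
        Cardinal.mk_le_mk_of_subset Set.inter_subset_left
    _ ≤ Cardinal.aleph 1 := hs
    _ < Cardinal.aleph 2 := Cardinal.aleph_lt_aleph.2 one_lt_two

/-! ### Canonical functions of countable filtrations -/

theorem canonical_iff {γ : Ordinal.{0}} {f : Ordinal.{0} → Ordinal.{0}} :
    Canonical γ f ↔ (∀ β < γ, ∀ g, Canonical β g → LtOnClub g f) ∧
      ∀ h, (∀ β < γ, ∀ g, Canonical β g → LtOnClub g h) → BddOnClub f h := by
  rw [Canonical, Ordinal.lt_wf.fix_eq]

theorem Canonical.bddOnClub {γ : Ordinal.{0}} {f g : Ordinal.{0} → Ordinal.{0}}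
    (hf : Canonical γ f) (hg : Canonical γ g) : BddOnClub f g :=
  (canonical_iff.1 hf).2 g (canonical_iff.1 hg).1

theorem mk_biUnion_lt_omega1_le {X : Ordinal.{0} → Set Ordinal.{0}}
    (hcount : ∀ α < omega1, (X α).Countable) :
    Cardinal.mk (⋃ α < omega1, X α : Set _) ≤ Cardinal.aleph 1 := by
  have hω₁ : Cardinal.mk (Set.Iio omega1) = Cardinal.aleph 1 := by
    simp [Cardinal.mk_Iio_ordinal, omega1]
  calc Cardinal.mk (⋃ α ∈ Set.Iio omega1, X α : Set _)
      ≤ Cardinal.mk (Set.Iio omega1) * ⨆ α : Set.Iio omega1, Cardinal.mk (X α) :=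
        Cardinal.mk_biUnion_le _ _
    _ ≤ Cardinal.aleph 1 * Cardinal.aleph0 :=
        mul_le_mul' hω₁.le (ciSup_le' fun α => (hcount α α.2).le_aleph0)
    _ = Cardinal.aleph 1 := Cardinal.mul_aleph0_eq (Cardinal.aleph0_le_aleph 1)

section Filtration

variable {X : Ordinal.{0} → Set Ordinal.{0}}

theorem lt_otp_inter_Iio_of_canonical (hmono : Monotone X) {v : Ordinal.{0}}
    (IH : ∀ u < v, Canonical (otp ((⋃ α < omega1, X α) ∩ Set.Iio u))
      fun α => otp (X α ∩ Set.Iio u))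
    {β : Ordinal.{0}} (hβ : β < otp ((⋃ α < omega1, X α) ∩ Set.Iio v))
    {g : Ordinal.{0} → Ordinal.{0}} (hg : Canonical β g) :
    LtOnClub g fun α => otp (X α ∩ Set.Iio v) := by
  obtain ⟨u, hu, huv, rfl⟩ := exists_otp_inter_Iio_eq hβ
  obtain ⟨α₀, hα₀, huα₀⟩ : ∃ α₀ < omega1, u ∈ X α₀ := by simpa using hu
  obtain ⟨C, hC, hgC⟩ := hg.bddOnClub (IH u huv)
  refine ⟨C ∩ Set.Ioo α₀ omega1, hC.inter (isClub_Ioo hα₀), fun α ⟨hαC, hα, _⟩ => ?_⟩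
  exact (hgC α hαC).trans_lt (otp_inter_Iio_lt_of_mem (hmono hα.le huα₀) huv)

/-- Otherwise `h α = otp (X α ∩ Iio (u α)) < otp (X α ∩ Iio v)` on a stationary set. Fodor's
lemma, applied to the stage at which `u α` appears in `X` and then to `u α` itself, makes
`u α = u₀` on a stationary set, while the canonical function `α ↦ otp (X α ∩ Iio u₀)` lies below
`h` on a club. -/
theorem otp_inter_Iio_bddOnClub (hcount : ∀ α < omega1, (X α).Countable)
    (hcont : ∀ α, Order.IsSuccLimit α → ∀ u ∈ X α, ∃ β < α, u ∈ X β) {v : Ordinal.{0}}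
    (IH : ∀ u < v, Canonical (otp ((⋃ α < omega1, X α) ∩ Set.Iio u))
      fun α => otp (X α ∩ Set.Iio u))
    {h : Ordinal.{0} → Ordinal.{0}}
    (H : ∀ β < otp ((⋃ α < omega1, X α) ∩ Set.Iio v), ∀ g, Canonical β g → LtOnClub g h) :
    BddOnClub (fun α => otp (X α ∩ Set.Iio v)) h := by
  by_contra hbdd
  obtain ⟨S, hS, hSlt, hSlim⟩ : ∃ S, IsStat S ∧ (∀ α ∈ S, h α < otp (X α ∩ Set.Iio v)) ∧
      ∀ α ∈ S, Order.IsSuccLimit α :=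
    ⟨_, (isStat_of_not_bddOnClub hbdd).inter_isClub isClub_setOf_isSuccLimit,
      fun α hα => hα.1.2, fun α hα => hα.2.2⟩
  choose! u hu huv hhu using fun α (hα : α ∈ S) => exists_otp_inter_Iio_eq (hSlt α hα)
  choose! F hF hFu using fun α (hα : α ∈ S) => hcont α (hSlim α hα) _ (hu α hα)
  obtain ⟨β₀, hβ₀, hS₀⟩ := hS.fodor hF
  obtain ⟨u₀, hS₁⟩ := hS₀.exists_isStat_fiber_of_countable (hcount β₀ hβ₀)
    fun α hα => hα.2 ▸ hFu α hα.1
  obtain ⟨α₁, ⟨hα₁, hFα₁⟩, rfl⟩ := hS₁.nonempty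
  have hu₀ : u α₁ ∈ ⋃ α < omega1, X α := Set.mem_biUnion hβ₀ (hFα₁ ▸ hFu α₁ hα₁)
  obtain ⟨C, hC, hCh⟩ := H _ (otp_inter_Iio_lt_of_mem hu₀ (huv α₁ hα₁)) _ (IH _ (huv α₁ hα₁))
  obtain ⟨α, ⟨⟨hαS, -⟩, hαu⟩, hαC⟩ := hS₁ C hC
  exact (hCh α hαC).ne (hαu ▸ hhu α hαS)

theorem canonical_otp_inter_Iio (hmono : Monotone X)
    (hcount : ∀ α < omega1, (X α).Countable)
    (hcont : ∀ α, Order.IsSuccLimit α → ∀ u ∈ X α, ∃ β < α, u ∈ X β) (v : Ordinal.{0}) :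
    Canonical (otp ((⋃ α < omega1, X α) ∩ Set.Iio v)) fun α => otp (X α ∩ Set.Iio v) := by
  induction v using WellFoundedLT.induction with
  | _ v IH =>
    exact canonical_iff.2 ⟨fun β hβ g hg => lt_otp_inter_Iio_of_canonical hmono IH hβ hg,
      fun h H => otp_inter_Iio_bddOnClub hcount hcont IH H⟩

end Filtration

/-! ### Codes of wellfounded relations on `ω` -/

section Lists

variable {α : Type*}

theorem getD_ofFn (x : ℕ → α) {n i : ℕ} (h : i < n) (d : α) :
    (List.ofFn fun j : Fin n => x j).getD i d = x i := by
  rw [List.getD_eq_getElem _ _ (by simpa using h), List.getElem_ofFn]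

theorem take_eq_ofFn {l : List α} {x : ℕ → α} {d : α} (h : ∀ i < l.length, l.getD i d = x i)
    {n : ℕ} (hn : n ≤ l.length) : l.take n = List.ofFn fun i : Fin n => x i := by
  refine List.ext_getElem (by simp [hn]) fun i h₁ h₂ => ?_
  rw [List.getElem_take, List.getElem_ofFn, ← List.getD_eq_getElem _ d, h i (by simp at h₁; omega)]

theorem ofFn_prefix_ofFn (x : ℕ → α) {m n : ℕ} (h : m ≤ n) :
    (List.ofFn fun i : Fin m => x i) <+: List.ofFn fun i : Fin n => x i := by
  rw [List.prefix_iff_eq_take, List.length_ofFn,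
    take_eq_ofFn (fun i hi => getD_ofFn x (by simpa using hi) (x 0)) (by simpa using h)]

theorem getD_eq_of_prefix {l₁ l₂ : List α} (h : l₁ <+: l₂) {i : ℕ} (hi : i < l₁.length) (d : α) :
    l₁.getD i d = l₂.getD i d := by
  rw [List.getD_eq_getElem _ _ hi, List.getD_eq_getElem _ _ (hi.trans_le h.length_le),
    h.getElem hi]

theorem exists_getD_eq_of_prefix_chain {l : ℕ → List α} (d : α) (hl : ∀ n, l n <+: l (n + 1))
    (hlen : ∀ n, n < (l n).length) :
    ∃ x : ℕ → α, ∀ n, ∀ i < (l n).length, (l n).getD i d = x i := by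
  have hmono {m n : ℕ} (h : m ≤ n) : l m <+: l n := by
    induction n, h using Nat.le_induction with
    | base => exact List.prefix_refl _
    | succ n _ ih => exact ih.trans (hl n)
  refine ⟨fun i => (l (i + 1)).getD i d, fun n i hi => ?_⟩
  rcases le_total n (i + 1) with h | h
  · exact getD_eq_of_prefix (hmono h) hi d
  · exact (getD_eq_of_prefix (hmono h) (by have := hlen (i + 1); omega) d).symm

end Lists

/-- The tree on `ω × ω` searching, along a code `x`, for a sequence `y` of increasing indices
that descends in the coded relation `k ≺ l :↔ x ⟨k, l⟩ = 1`. -/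
def descTree : Set (List ℕ × List ℕ) :=
  {p | p.1.length = p.2.length ∧ ∀ i, i + 1 < p.2.length →
    p.2.getD i 0 < p.2.getD (i + 1) 0 ∧
      (Nat.pair (p.2.getD (i + 1) 0) (p.2.getD i 0) < p.1.length →
        p.1.getD (Nat.pair (p.2.getD (i + 1) 0) (p.2.getD i 0)) 0 = 1)}

theorem isTreeN_descTree : IsTreeN descTree := by
  rintro ⟨s, t⟩ ⟨hlen, hdesc⟩
  dsimp only at hlen hdesc
  refine ⟨hlen, fun n => ⟨by simp [hlen], fun i hi => ?_⟩⟩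
  simp only [List.length_take] at hi ⊢
  have htake (l : List ℕ) {j : ℕ} (hj : j < min n l.length) : (l.take n).getD j 0 = l.getD j 0 :=
    getD_eq_of_prefix (List.take_prefix n l) (by simpa using hj) 0
  rw [htake t (by omega), htake t (by omega)]
  refine ⟨(hdesc i (by omega)).1, fun hpair => ?_⟩
  rw [htake s hpair]
  exact (hdesc i (by omega)).2 (by omega)

theorem mem_projN_descTree {x : ℕ → ℕ} :
    x ∈ projN descTree ↔
      ∃ y : ℕ → ℕ, ∀ i, y i < y (i + 1) ∧ x (Nat.pair (y (i + 1)) (y i)) = 1 := by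
  refine exists_congr fun y => ⟨fun hy i => ?_, fun hy n => ⟨by simp, fun i hi => ?_⟩⟩
  · obtain ⟨-, hdesc⟩ := hy (max (i + 2) (Nat.pair (y (i + 1)) (y i) + 1))
    have := hdesc i (by simp)
    simp only [List.length_ofFn] at this
    rw [getD_ofFn y (by omega), getD_ofFn y (by omega), getD_ofFn x (by omega)] at this
    exact ⟨this.1, this.2 (by omega)⟩
  · simp only [List.length_ofFn] at hi ⊢
    rw [getD_ofFn y (by omega), getD_ofFn y (by omega)]
    exact ⟨(hy i).1, fun hpair => (getD_ofFn x hpair 0).trans (hy i).2⟩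

/-- `x` codes the relation `k ≺ l :↔ x ⟨k, l⟩ = 1`, which only relates larger to smaller indices
and is ranked by `b`; as every `ξ < β` is a rank at arbitrarily large indices, the relation is
wellfounded of rank at least `β`. -/
def IsCodeAbove (x : ℕ → ℕ) (β : Ordinal.{0}) : Prop :=
  ∃ b : ℕ → Ordinal.{0}, (∀ k l, x (Nat.pair k l) = 1 ↔ l < k ∧ b k < b l) ∧
    ∀ ξ < β, ∀ m, ∃ k, m < k ∧ b k = ξ

theorem exists_isCodeAbove {β : Ordinal.{0}} (hβ : β < omega1) : ∃ x, IsCodeAbove x β := by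
  obtain ⟨e, he⟩ := Set.countable_iff_exists_subset_range.1 (countable_Iio_of_lt_omega1 hβ)
  let b : ℕ → Ordinal.{0} := fun k => e k.unpair.1
  refine ⟨fun m => if m.unpair.2 < m.unpair.1 ∧ b m.unpair.1 < b m.unpair.2 then 1 else 0, b,
    fun k l => by simp, fun ξ hξ m => ?_⟩
  obtain ⟨i, rfl⟩ := he hξ
  exact ⟨Nat.pair i (m + 1), (Nat.lt_succ_self m).trans_le (Nat.right_le_pair i (m + 1)),
    by simp [b]⟩

theorem IsCodeAbove.not_mem_projN {x : ℕ → ℕ} {β : Ordinal.{0}} (hx : IsCodeAbove x β) :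
    x ∉ projN descTree := by
  rw [mem_projN_descTree]
  rintro ⟨y, hy⟩
  obtain ⟨b, hb, -⟩ := hx
  obtain ⟨_, ⟨i, rfl⟩, hmin⟩ := Ordinal.lt_wf.has_min (Set.range fun i => b (y i)) ⟨_, 0, rfl⟩
  exact hmin _ ⟨i + 1, rfl⟩ ((hb _ _).1 (hy i).2).2

theorem IsCodeAbove.lt_of_eq_one {x : ℕ → ℕ} {β : Ordinal.{0}} (hx : IsCodeAbove x β) {k l : ℕ}
    (h : x (Nat.pair k l) = 1) : l < k :=
  let ⟨_, hb, _⟩ := hx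
  ((hb k l).1 h).1

theorem IsCodeAbove.le_otp {x : ℕ → ℕ} {β : Ordinal.{0}} (hx : IsCodeAbove x β)
    {R : Set Ordinal.{0}} {δ : Ordinal.{0}} {ψ : ℕ → Ordinal.{0}}
    (hψ : ∀ k l, x (Nat.pair k l) = 1 → ψ k < ψ l) (hR : ∀ k, ψ k ∈ R) (hδ : ∀ k, ψ k < δ) :
    β ≤ otp (R ∩ Set.Iio δ) := by
  obtain ⟨b, hb, hrich⟩ := hx
  have key (ξ : Ordinal.{0}) : ξ < β → ∀ l, b l = ξ → ξ ≤ otp (R ∩ Set.Iio (ψ l)) := by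
    induction ξ using WellFoundedLT.induction with
    | _ ξ IH =>
      refine fun hξ l hbl => le_of_forall_lt fun ξ' hξ' => ?_
      obtain ⟨k, hlk, hbk⟩ := hrich ξ' (hξ'.trans hξ) l
      have hkl : ψ k < ψ l := hψ k l ((hb k l).2 ⟨hlk, hbk ▸ hbl ▸ hξ'⟩)
      exact (IH ξ' hξ' (hξ'.trans hξ) k hbk).trans_lt (otp_inter_Iio_lt_of_mem (hR k) hkl)
  refine le_of_forall_lt fun ξ hξ => ?_
  obtain ⟨k, -, hbk⟩ := hrich ξ hξ 0
  exact (key ξ hξ k hbk).trans_lt (otp_inter_Iio_lt_of_mem (hR k) (hδ k))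

/-! ### The order `≤_t` on a tree on `ω × ω₁` and its ranks -/

/-- The strict part of the order `≤_t` on a tree on `ω × ω₁`: a node of length `(k + 1) ^ 2`
stands for the number `k`, and has decided `x ⟨k, l⟩` for every `l < k`
(`Nat.pair_lt_max_add_one_sq`); `p` lies below `q` if it extends `q` and codes `k ≺ l`. -/
def treeDesc (p q : List ℕ × List Ordinal.{0}) : Prop :=
  ∃ k l, l < k ∧ p.1.length = (k + 1) ^ 2 ∧ q.1.length = (l + 1) ^ 2 ∧
    q.1 <+: p.1 ∧ q.2 <+: p.2 ∧ p.1.getD (Nat.pair k l) 0 = 1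

theorem pair_lt_add_one_sq {k l : ℕ} (h : l < k) : Nat.pair k l < (k + 1) ^ 2 := by
  simpa [max_eq_left h.le] using Nat.pair_lt_max_add_one_sq k l

theorem treeDesc_ofFn {x : ℕ → ℕ} {y : ℕ → Ordinal.{0}} {k l : ℕ} (hlk : l < k)
    (hx : x (Nat.pair k l) = 1) :
    treeDesc
      (List.ofFn (fun i : Fin ((k + 1) ^ 2) => x i), List.ofFn fun i : Fin ((k + 1) ^ 2) => y i)
      (List.ofFn (fun i : Fin ((l + 1) ^ 2) => x i), List.ofFn fun i : Fin ((l + 1) ^ 2) => y i) := by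
  have hle : (l + 1) ^ 2 ≤ (k + 1) ^ 2 := Nat.pow_le_pow_left (by omega) 2
  exact ⟨k, l, hlk, by simp, by simp, ofFn_prefix_ofFn x hle, ofFn_prefix_ofFn y hle,
    (getD_ofFn x (pair_lt_add_one_sq hlk) 0).trans hx⟩

/-- A descending sequence of nodes builds a branch `(x, y)` of `T` together with a sequence along
which `x` codes a descent, i.e. a real in `projO T ∩ projN descTree`. -/
theorem wellFounded_treeDesc {T : Set (List ℕ × List Ordinal.{0})} (hT : IsTreeO T)
    (hWF : ∀ x ∈ projO T, x ∉ projN descTree) : WellFounded fun p q : T => treeDesc p.1 q.1 := by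
  refine wellFounded_iff_isEmpty_descending_chain.2 ⟨fun ⟨p, hp⟩ => ?_⟩
  choose k m hmk hk hm hpre₁ hpre₂ hcode using hp
  have hmk' (n : ℕ) : m (n + 1) = k n :=
    Nat.succ_injective (Nat.pow_left_injective two_ne_zero ((hm (n + 1)).symm.trans (hk n)))
  have hmono : StrictMono m := strictMono_nat_of_lt_succ fun n => hmk' n ▸ hmk n
  have hlen (n : ℕ) : n < ((p n).1.1).length := by
    rw [hm n]
    have := hmono.le_apply (x := n)
    nlinarith
  have hlen₂ (n : ℕ) : ((p n).1.2).length = ((p n).1.1).length := ((hT _ (p n).2).1).symm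
  obtain ⟨x, hx⟩ := exists_getD_eq_of_prefix_chain 0 hpre₁ hlen
  obtain ⟨y, hy⟩ := exists_getD_eq_of_prefix_chain 0 hpre₂ fun n => hlen₂ n ▸ hlen n
  refine hWF x ⟨y, fun n => ?_⟩
    (mem_projN_descTree.2 ⟨m, fun i => ⟨hmono (Nat.lt_succ_self i), ?_⟩⟩)
  · rw [← take_eq_ofFn (hx n) (hlen n).le, ← take_eq_ofFn (hy n) (hlen₂ n ▸ hlen n).le]
    exact (hT _ (p n).2).2 n
  · have hlt : Nat.pair (m (i + 1)) (m i) < ((p (i + 1)).1.1).length := by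
      rw [hm (i + 1)]; exact pair_lt_add_one_sq (hmono (Nat.lt_succ_self i))
    rw [← hx _ _ hlt, hmk' i]
    exact hcode i

theorem exists_rank_of_small {α : Type*} [Small.{0} α] {r : α → α → Prop}
    (h : WellFounded r) : ∃ ρ : α → Ordinal.{0}, ∀ a b, r a b → ρ a < ρ b := by
  let e := equivShrink α
  have : IsWellFounded (Shrink α) (InvImage r e.symm) := ⟨InvImage.wf _ h⟩
  exact ⟨fun a => IsWellFounded.rank (InvImage r e.symm) (e a),
    fun a b hab => IsWellFounded.rank_lt_of_rel (by simpa [InvImage] using hab)⟩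

theorem subset_range_of_forall_lt {T : Set (List ℕ × List Ordinal.{0})} {δ : Ordinal.{0}}
    (h : ∀ p ∈ T, ∀ o ∈ p.2, o < δ) :
    T ⊆ Set.range fun q : List ℕ × List (Set.Iio δ) => (q.1, q.2.map Subtype.val) := by
  rintro ⟨s, t⟩ hp
  lift t to List (Set.Iio δ) using h _ hp
  exact ⟨(s, t), rfl⟩

theorem small_of_forall_lt {T : Set (List ℕ × List Ordinal.{0})} {δ : Ordinal.{0}}
    (h : ∀ p ∈ T, ∀ o ∈ p.2, o < δ) : Small.{0} T :=
  small_subset (subset_range_of_forall_lt h)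

theorem countable_of_forall_lt {T : Set (List ℕ × List Ordinal.{0})} {δ : Ordinal.{0}}
    (hδ : δ < omega1) (h : ∀ p ∈ T, ∀ o ∈ p.2, o < δ) : T.Countable :=
  have := (countable_Iio_of_lt_omega1 hδ).to_subtype
  (Set.countable_range _).mono (subset_range_of_forall_lt h)

section RankImage

variable {T : Set (List ℕ × List Ordinal.{0})} (ρ : T → Ordinal.{0})

def rankImage (α : Ordinal.{0}) : Set Ordinal.{0} :=
  ρ '' {p | ∀ o ∈ p.1.2, o < α}

theorem rankImage_mono : Monotone (rankImage ρ) :=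
  fun _ _ h => Set.image_mono fun _ hp o ho => (hp o ho).trans_le h

theorem countable_rankImage (α : Ordinal.{0}) (hα : α < omega1) :
    (rankImage ρ α).Countable := by
  have hc := countable_of_forall_lt hα (T := {p ∈ T | ∀ o ∈ p.2, o < α}) fun _ hp => hp.2
  refine ((hc.preimage Subtype.val_injective).mono ?_).image ρ
  exact fun p hp => ⟨p.2, hp⟩

theorem exists_mem_rankImage_of_isSuccLimit (α : Ordinal.{0}) (hα : Order.IsSuccLimit α)
    (u : Ordinal.{0}) (hu : u ∈ rankImage ρ α) : ∃ β < α, u ∈ rankImage ρ β := by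
  obtain ⟨p, hp, rfl⟩ := hu
  refine ⟨p.1.2.toFinset.sup Order.succ, (Finset.sup_lt_iff hα.pos).2 fun o ho =>
    hα.succ_lt (hp o (List.mem_toFinset.1 ho)), p, fun o ho => ?_, rfl⟩
  exact (Order.lt_succ o).trans_le (Finset.le_sup (f := Order.succ) (List.mem_toFinset.2 ho))

/-- Along a branch of `T ↾ (ω × α)` through the code `x`, the nodes of lengths `(k + 1) ^ 2` map
the coded relation into the ranks of `T ↾ (ω × α)`. -/
theorem IsCodeAbove.le_otp_rankImage (hρ : ∀ p q : T, treeDesc p.1 q.1 → ρ p < ρ q)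
    {δ : Ordinal.{0}} (hδ : ∀ p, ρ p < δ) {x : ℕ → ℕ} {β α : Ordinal.{0}}
    (hx : IsCodeAbove x β) (hxα : x ∈ projOBelow T α) : β ≤ otp (rankImage ρ α ∩ Set.Iio δ) := by
  obtain ⟨y, hyα, hxy⟩ := hxα
  let node (k : ℕ) : T := ⟨_, hxy ((k + 1) ^ 2)⟩
  refine hx.le_otp (ψ := fun k => ρ (node k)) (fun k l hkl => hρ _ _ ?_)
    (fun k => ⟨node k, fun o ho => ?_, rfl⟩) fun k => hδ _
  · exact treeDesc_ofFn (hx.lt_of_eq_one hkl) hkl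
  · obtain ⟨i, rfl⟩ := List.mem_ofFn.1 ho
    exact hyα i

end RankImage

theorem stmt_11
    (hSB : ∀ S : Set (List ℕ × List ℕ), IsTreeN S →
      ∀ f : Ordinal.{0} → (ℕ → ℕ), (∀ α, α < omega1 → f α ∉ projN S) →
      ∃ T : Set (List ℕ × List Ordinal.{0}), IsTreeO T ∧
        (∀ p ∈ T, ∀ o ∈ p.2, o < omega1) ∧
        projO T = {x : ℕ → ℕ | x ∉ projN S} ∧
        ∃ C, IsClub C ∧ ∀ α ∈ C, f α ∈ projOBelow T α) :
    Bounding := by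
  intro f hf
  choose! x hx using fun α hα => exists_isCodeAbove (hf α hα)
  obtain ⟨T, hT, hTω₁, hTproj, C, hC, hCT⟩ :=
    hSB descTree isTreeN_descTree x fun α hα => (hx α hα).not_mem_projN
  have hwf := wellFounded_treeDesc hT fun y hy => by rwa [hTproj] at hy
  have := small_of_forall_lt hTω₁
  obtain ⟨ρ, hρ⟩ := exists_rank_of_small hwf
  obtain ⟨δ, hδ⟩ := Ordinal.bddAbove_of_small (s := Set.range ρ)
  refine ⟨_, otp_inter_Iio_lt_omega2 (mk_biUnion_lt_omega1_le (countable_rankImage ρ)) (δ + 1),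
    _, canonical_otp_inter_Iio (rankImage_mono ρ) (countable_rankImage ρ)
      (exists_mem_rankImage_of_isSuccLimit ρ) (δ + 1), C, hC, fun α hα => ?_⟩
  exact (hx α (hC.1 hα)).le_otp_rankImage ρ hρ (fun p => Order.lt_add_one_iff.2 (hδ ⟨p, rfl⟩))
    (hCT α hα)

end P746
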